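/- arXiv:2605.06385 — 3 statements merged into one kernel-verified Lean document; each statement's English description precedes it below -/
import Mathlib

section
/- Every finite directed graph G=(V,E), possibly containing directed cycles, admits at least one σ-acyclification; that is, there exists a directed acyclic graph G^acy=(V,E^acy) on the same node set satisfying the two defining conditions of σ-acyclification. -/
/-- A directed graph (loopless, possibly cyclic). -/
structure DiGraph (V : Type) where
  Edge : V → V → Prop
  loopless : ∀ v, ¬ Edge v v

namespace DiGraph

variable {V : Type}

/-- Reachability by a directed path (possibly of length zero). -/
def reach (G : DiGraph V) : V → V → Prop := Relation.ReflTransGen G.Edge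

/-- Ancestors of a set: nodes admitting a directed path (possibly of length zero)
to some node of the set. -/
def anc (G : DiGraph V) (S : Set V) : Set V := {Z | ∃ s ∈ S, G.reach Z s}

/-- The strongly connected component of a node. -/
def scc (G : DiGraph V) (X : V) : Set V := {Z | G.reach X Z ∧ G.reach Z X}

/-- Descendants: nodes `Z ≠ X` with a directed path from `X` to `Z`. -/
def de (G : DiGraph V) (X : V) : Set V := {Z | Z ≠ X ∧ Relation.TransGen G.Edge X Z}

/-- Children of a node. -/
def ch (G : DiGraph V) (X : V) : Set V := {Z | G.Edge X Z}

/-- A directed graph is acyclic (a DAG) if it has no directed cycles. -/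
def Acyclic (G : DiGraph V) : Prop := ∀ v, ¬ Relation.TransGen G.Edge v v

end DiGraph

/-- A path between `X` and `Y` in `G`: a sequence of `k+2` distinct nodes,
where consecutive nodes are joined by an edge of `G` in one of the two
orientations (recorded by `dir`: `dir i = true` means the edge
`node i → node (i+1)` is used, `dir i = false` means `node (i+1) → node i`). -/
structure GPath {V : Type} (G : DiGraph V) (X Y : V) where
  k : ℕ
  node : Fin (k + 2) → V
  dir : Fin (k + 1) → Bool
  inj : Function.Injective node
  first : node 0 = X
  last : node (Fin.last (k + 1)) = Y
  adj : ∀ i : Fin (k + 1),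
    (dir i = true → G.Edge (node i.castSucc) (node i.succ)) ∧
    (dir i = false → G.Edge (node i.succ) (node i.castSucc))

namespace GPath

variable {V : Type} {G : DiGraph V} {X Y : V}

/-- The `j`-th interior (non-endpoint) node of the path (position `j+1`). -/
def inner (p : GPath G X Y) (j : Fin p.k) : V := p.node j.succ.castSucc

/-- The interior node at position `j+1` is a collider: both incident edges
of the path point into it. -/
def isCollider (p : GPath G X Y) (j : Fin p.k) : Prop :=
  p.dir j.castSucc = true ∧ p.dir j.succ = false

/-- The path is σ-blocked by `S`. -/
def sigmaBlocked (p : GPath G X Y) (S : Set V) : Prop :=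
  ∃ j : Fin p.k,
    (p.isCollider j ∧ p.inner j ∉ G.anc S) ∨
    (¬ p.isCollider j ∧ p.inner j ∈ S ∧
      ((p.dir j.succ = true ∧ p.node j.succ.succ ∉ G.scc (p.inner j)) ∨
       (p.dir j.castSucc = false ∧ p.node j.castSucc.castSucc ∉ G.scc (p.inner j))))

/-- The path is d-blocked by `S`. -/
def dBlocked (p : GPath G X Y) (S : Set V) : Prop :=
  ∃ j : Fin p.k,
    (p.isCollider j ∧ p.inner j ∉ G.anc S) ∨
    (¬ p.isCollider j ∧ p.inner j ∈ S)

end GPath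

namespace DiGraph

variable {V : Type}

/-- `X` and `Y` are σ-separated given `S`: every path between them is σ-blocked. -/
def sigmaSep (G : DiGraph V) (X Y : V) (S : Set V) : Prop :=
  ∀ p : GPath G X Y, p.sigmaBlocked S

/-- `X` and `Y` are d-separated given `S`: every path between them is d-blocked. -/
def dSep (G : DiGraph V) (X Y : V) (S : Set V) : Prop :=
  ∀ p : GPath G X Y, p.dBlocked S

end DiGraph

/-- `Ga` is a σ-acyclification of `G`. -/
def IsAcyclification {V : Type} (G Ga : DiGraph V) : Prop :=
  Ga.Acyclic ∧
  (∀ X Y : V, X ≠ Y → X ∉ G.scc Y → (Ga.Edge X Y ↔ ∃ W ∈ G.scc Y, G.Edge X W)) ∧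
  (∀ X Y : V, X ≠ Y → X ∈ G.scc Y → Xor' (Ga.Edge X Y) (Ga.Edge Y X))

namespace DiGraph

variable {V : Type}

/-- `S` is the observed Markov blanket of `X` (w.r.t. σ-separation) given the
observed node set `Obs`: the minimal set `S ⊆ Obs \ {X}` such that `X` is
σ-separated from every node of `Obs \ (S ∪ {X})` given `S`. -/
def IsSigmaMB (G : DiGraph V) (Obs : Set V) (X : V) (S : Set V) : Prop :=
  S ⊆ Obs \ {X} ∧
  (∀ W ∈ Obs \ (S ∪ {X}), G.sigmaSep X W S) ∧
  (∀ T ⊆ Obs \ {X}, (∀ W ∈ Obs \ (T ∪ {X}), G.sigmaSep X W T) → S ⊆ T)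

/-- `S` is the observed Markov blanket of `X` (w.r.t. d-separation). -/
def IsDMB (G : DiGraph V) (Obs : Set V) (X : V) (S : Set V) : Prop :=
  S ⊆ Obs \ {X} ∧
  (∀ W ∈ Obs \ (S ∪ {X}), G.dSep X W S) ∧
  (∀ T ⊆ Obs \ {X}, (∀ W ∈ Obs \ (T ∪ {X}), G.dSep X W T) → S ⊆ T)

/-- `Z` is a backdoor adjustment set for `(X, Y)`: `Z` avoids `X`, `Y` and the
descendants of `X`, and σ-blocks every backdoor path from `X` to `Y`
(a path whose first edge has an arrowhead into `X`). -/
def IsBackdoorAdjustment (G : DiGraph V) (X Y : V) (Z : Set V) : Prop :=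
  X ∉ Z ∧ Y ∉ Z ∧ Z ∩ G.de X = ∅ ∧
  ∀ p : GPath G X Y, p.dir 0 = false → p.sigmaBlocked Z

end DiGraph

/-- Pre-treatment assumption: the outcome `Y` has no descendants and the
treatment `X` has no children except possibly `Y`. -/
def PreTreatment {V : Type} (G : DiGraph V) (X Y : V) : Prop :=
  G.de Y = ∅ ∧ G.ch X ⊆ {Y}

section AcyAux

variable {V : Type} {G : DiGraph V}

lemma scc_mem_iff {X Y : V} : X ∈ G.scc Y ↔ G.reach Y X ∧ G.reach X Y := Iff.rfl

lemma scc_symm {X Y : V} (h : X ∈ G.scc Y) : Y ∈ G.scc X := ⟨h.2, h.1⟩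

lemma scc_trans {X Y Z : V} (h1 : X ∈ G.scc Y) (h2 : Y ∈ G.scc Z) : X ∈ G.scc Z :=
  ⟨h2.1.trans h1.1, h1.2.trans h2.2⟩

lemma self_mem_scc (X : V) : X ∈ G.scc X := ⟨Relation.ReflTransGen.refl, Relation.ReflTransGen.refl⟩

end AcyAux

/-- Every finite directed graph admits a σ-acyclification. -/
theorem exists_acyclification {V : Type} [Fintype V] (G : DiGraph V) :
    ∃ Ga : DiGraph V, IsAcyclification G Ga := by
  classical
  obtain ⟨n, ⟨f⟩⟩ : ∃ n, Nonempty (V ≃ Fin n) := ⟨_, ⟨Fintype.equivFin V⟩⟩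
  set E : V → V → Prop := fun X Y =>
    (X ∈ G.scc Y ∧ f X < f Y) ∨ (X ∉ G.scc Y ∧ ∃ W ∈ G.scc Y, G.Edge X W) with hE
  -- the strict relation dominating E
  set R : V → V → Prop := fun X Y =>
    (G.reach X Y ∧ ¬ G.reach Y X) ∨ (X ∈ G.scc Y ∧ f X < f Y) with hR
  have hER : ∀ X Y, E X Y → R X Y := by
    intro X Y h
    rcases h with ⟨hs, hf⟩ | ⟨hns, W, hW, hXW⟩
    · exact Or.inr ⟨hs, hf⟩
    · refine Or.inl ⟨(Relation.ReflTransGen.single hXW).trans hW.2, fun hYX => ?_⟩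
      exact hns ⟨hYX, (Relation.ReflTransGen.single hXW).trans hW.2⟩
  have hRtrans : ∀ X Y Z, R X Y → R Y Z → R X Z := by
    intro X Y Z h1 h2
    rcases h1 with ⟨r1, nr1⟩ | ⟨s1, f1⟩ <;> rcases h2 with ⟨r2, nr2⟩ | ⟨s2, f2⟩
    · exact Or.inl ⟨r1.trans r2, fun h => nr2 (h.trans r1)⟩
    · exact Or.inl ⟨r1.trans s2.2, fun h => nr1 (s2.2.trans h)⟩
    · exact Or.inl ⟨s1.2.trans r2, fun h => nr2 (h.trans s1.2)⟩
    · exact Or.inr ⟨scc_trans s1 s2, f1.trans f2⟩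
  have hRirr : ∀ X, ¬ R X X := by
    intro X h
    rcases h with ⟨r, nr⟩ | ⟨_, hf⟩
    · exact nr r
    · exact lt_irrefl _ hf
  have hloop : ∀ v, ¬ E v v := by
    intro v h
    exact hRirr v (hER v v h)
  refine ⟨⟨E, hloop⟩, ?_, ?_, ?_⟩
  · -- acyclic
    intro v hv
    have : R v v := by
      have : ∀ w, Relation.TransGen E v w → R v w := by
        intro w hw
        induction hw with
        | single h => exact hER _ _ h
        | tail _ h ih => exact hRtrans _ _ _ ih (hER _ _ h)
      exact this v hv
    exact hRirr v this
  · -- non-SCC edges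
    intro X Y hne hns
    constructor
    · intro h
      rcases h with ⟨hs, _⟩ | ⟨_, h⟩
      · exact absurd hs hns
      · exact h
    · intro h
      exact Or.inr ⟨hns, h⟩
  · -- within-SCC edges
    intro X Y hne hs
    have hfne : f X ≠ f Y := fun h => hne (f.injective h)
    have hXY : E X Y ↔ f X < f Y := by
      constructor
      · intro h
        rcases h with ⟨_, h⟩ | ⟨hns, _⟩
        · exact h
        · exact absurd hs hns
      · intro h; exact Or.inl ⟨hs, h⟩
    have hYX : E Y X ↔ f Y < f X := by
      constructor
      · intro h
        rcases h with ⟨_, h⟩ | ⟨hns, _⟩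
        · exact h
        · exact absurd (scc_symm hs) hns
      · intro h; exact Or.inl ⟨scc_symm hs, h⟩
    rcases lt_or_gt_of_ne hfne with h | h
    · exact Or.inl ⟨hXY.mpr h, fun hyx => absurd (hYX.mp hyx) (asymm h)⟩
    · exact Or.inr ⟨hYX.mpr h, fun hxy => absurd (hXY.mp hxy) (asymm h)⟩
end

section
/- Let G=(V,E) be a directed graph, possibly cyclic, and let G^acy be any σ-acyclification of G. Then for all distinct nodes A,B ∈ V and all sets Z ⊆ V\{A,B}, A and B are d-separated given Z in G^acy if and only if A and B are σ-separated given Z in G. -/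
/-!
Since the strongly connected components of the DAG `Ga` are singletons, d-separation in `Ga` is
σ-separation in `Ga`, and both sides are compared through σ-open walks from `A`. An open walk can
be shortened to an open path by cutting out loops at repeated vertices: a loop leaving a vertex
along an edge out of it must turn back at a collider, which makes the vertex an ancestor of `Z`.

An open walk of `Ga` becomes one of `G` by replacing each edge `x → y` of `Ga` with an edge of
`G` from `x` into the component of `y`, followed by a directed path inside that component.
Conversely, an open walk of `G` is followed in `Ga` one component at a time (`Mirror`): inside a
component `Ga` is a tournament, and an edge of `G` into a component yields edges of `Ga` to all
of its vertices.
-/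

namespace DiGraph

variable {V : Type} {G : DiGraph V} {Z : Set V} {A u v w x y z c t : V} {l d : Bool}

theorem mem_scc_self (G : DiGraph V) (v : V) : v ∈ G.scc v :=
  ⟨Relation.ReflTransGen.refl, Relation.ReflTransGen.refl⟩

theorem mem_scc_comm : x ∈ G.scc y ↔ y ∈ G.scc x :=
  ⟨fun h => ⟨h.2, h.1⟩, fun h => ⟨h.2, h.1⟩⟩

theorem scc_eq_of_mem (h : x ∈ G.scc y) : G.scc x = G.scc y := by
  ext z
  exact ⟨fun hz => ⟨h.1.trans hz.1, hz.2.trans h.2⟩, fun hz => ⟨h.2.trans hz.1, hz.2.trans h.1⟩⟩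

theorem mem_scc_of_edge (hx : x ∈ G.scc t) (he : G.Edge x y) (hy : G.reach y t) :
    y ∈ G.scc t :=
  ⟨Relation.ReflTransGen.tail hx.1 he, hy⟩

theorem mem_anc_of_mem (h : x ∈ Z) : x ∈ G.anc Z :=
  ⟨x, h, Relation.ReflTransGen.refl⟩

theorem mem_anc_of_reach (h : G.reach x y) (hy : y ∈ G.anc Z) : x ∈ G.anc Z := by
  obtain ⟨s, hs, hys⟩ := hy
  exact ⟨s, hs, Relation.ReflTransGen.trans h hys⟩

theorem mem_anc_of_edge (h : G.Edge x y) (hy : y ∈ G.anc Z) : x ∈ G.anc Z :=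
  mem_anc_of_reach (Relation.ReflTransGen.single h) hy

theorem Acyclic.eq_of_mem_scc (hG : G.Acyclic) (h : x ∈ G.scc y) : x = y := by
  obtain rfl | hyx := Relation.reflTransGen_iff_eq_or_transGen.mp h.1
  · rfl
  · exact absurd (hyx.trans_left h.2) (hG y)

theorem Acyclic.not_mem_of_imp_mem_scc (hG : G.Acyclic) (hne : x ≠ v)
    (h : v ∈ Z → x ∈ G.scc v) : v ∉ Z :=
  fun hv => hne (hG.eq_of_mem_scc (h hv))

/-- The vertex `v` of a walk `u, v, w` does not σ-block it; `l` (resp. `r`) records whether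
the edge between `u` (resp. `w`) and `v` has its arrowhead at `v`. -/
def SigmaOpenAt (G : DiGraph V) (Z : Set V) (u : V) (l : Bool) (v : V) (r : Bool) (w : V) :
    Prop :=
  (l = true → r = true → v ∈ G.anc Z) ∧ (l = false → v ∈ Z → u ∈ G.scc v) ∧
    (r = false → v ∈ Z → w ∈ G.scc v)

def DirEdge (G : DiGraph V) : Bool → V → V → Prop
  | true, x, y => G.Edge x y
  | false, x, y => G.Edge y x

theorem dirEdge_iff :
    G.DirEdge d x y ↔ (d = true → G.Edge x y) ∧ (d = false → G.Edge y x) := by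
  cases d <;> simp [DirEdge]

theorem DirEdge.ne (h : G.DirEdge d x y) : x ≠ y := by
  rintro rfl
  cases d <;> exact G.loopless x h

end DiGraph

namespace GPath

open DiGraph

variable {V : Type} {G : DiGraph V} {Z : Set V} {X Y : V}

theorem dirEdge (p : GPath G X Y) (i : Fin (p.k + 1)) :
    G.DirEdge (p.dir i) (p.node i.castSucc) (p.node i.succ) :=
  dirEdge_iff.mpr (p.adj i)

theorem not_sigmaBlocked_iff (p : GPath G X Y) :
    ¬ p.sigmaBlocked Z ↔ ∀ j : Fin p.k, G.SigmaOpenAt Z (p.node j.castSucc.castSucc)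
      (p.dir j.castSucc) (p.inner j) (!p.dir j.succ) (p.node j.succ.succ) := by
  simp only [sigmaBlocked, not_exists]
  refine forall_congr' fun j => ?_
  cases h₁ : p.dir j.castSucc <;> cases h₂ : p.dir j.succ <;>
    simp [SigmaOpenAt, isCollider, h₁, h₂, imp_and, and_comm]

theorem dBlocked_iff_sigmaBlocked (hG : G.Acyclic) (p : GPath G X Y) :
    p.dBlocked Z ↔ p.sigmaBlocked Z := by
  refine exists_congr fun j => ?_
  have hnext : p.node j.succ.succ ∉ G.scc (p.inner j) := fun h => by
    simpa [Fin.ext_iff] using p.inj (hG.eq_of_mem_scc h)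
  have hprev : p.node j.castSucc.castSucc ∉ G.scc (p.inner j) := fun h => by
    simpa [Fin.ext_iff] using p.inj (hG.eq_of_mem_scc h)
  cases h₁ : p.dir j.castSucc <;> cases h₂ : p.dir j.succ <;>
    simp [isCollider, h₁, h₂, hnext, hprev]

end GPath

namespace DiGraph

variable {V : Type} {G : DiGraph V} {Z : Set V} {A u v w x y z c t : V} {l d : Bool}

theorem Acyclic.dSep_iff_sigmaSep (hG : G.Acyclic) {X Y : V} :
    G.dSep X Y Z ↔ G.sigmaSep X Y Z :=
  forall_congr' fun p => p.dBlocked_iff_sigmaBlocked hG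

inductive Walk (G : DiGraph V) : V → V → Type
  | nil (v : V) : Walk G v v
  | cons {x y z : V} (d : Bool) (e : G.DirEdge d x y) (w : Walk G y z) : Walk G x z

namespace Walk

def length : ∀ {x z : V}, G.Walk x z → ℕ
  | _, _, nil _ => 0
  | _, _, cons _ _ w => w.length + 1

def support : ∀ {x z : V}, G.Walk x z → List V
  | _, _, nil v => [v]
  | _, _, cons (x := x) _ _ w => x :: w.support

def append : ∀ {x y z : V}, G.Walk x y → G.Walk y z → G.Walk x z
  | _, _, _, nil _, w' => w'
  | _, _, _, cons d e w, w' => cons d e (w.append w')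

def concat : ∀ {x y z : V} {d : Bool}, G.Walk x y → G.DirEdge d y z → G.Walk x z
  | _, _, _, _, nil _, e => cons _ e (nil _)
  | _, _, _, _, cons d' e' w, e => cons d' e' (w.concat e)

def getVert : ∀ {x z : V}, G.Walk x z → ℕ → V
  | _, _, nil v, _ => v
  | _, _, cons (x := x) _ _ _, 0 => x
  | _, _, cons _ _ w, n + 1 => w.getVert n

def dirAt : ∀ {x z : V}, G.Walk x z → ℕ → Bool
  | _, _, nil _, _ => true
  | _, _, cons d _ _, 0 => d
  | _, _, cons _ _ w, n + 1 => w.dirAt n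

/-- The second-to-last vertex, with `u` standing in for the empty walk. -/
def penult (u : V) : ∀ {x z : V}, G.Walk x z → V
  | _, _, nil _ => u
  | _, _, cons (x := x) _ _ w => w.penult x

def lastDir (l : Bool) : ∀ {x z : V}, G.Walk x z → Bool
  | _, _, nil _ => l
  | _, _, cons d _ w => w.lastDir d

/-- Every vertex but the last is σ-open, the walk being entered from `u` with an arrowhead at its
first vertex iff `l`. -/
def OpenFrom (Z : Set V) (u : V) (l : Bool) : ∀ {x z : V}, G.Walk x z → Prop
  | _, _, nil _ => True
  | _, _, cons (x := x) (y := y) d _ w => G.SigmaOpenAt Z u l x (!d) y ∧ w.OpenFrom Z x d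

def IsOpen (Z : Set V) : ∀ {x z : V}, G.Walk x z → Prop
  | _, _, nil _ => True
  | _, _, cons (x := x) d _ w => w.OpenFrom Z x d

theorem length_append (w₁ : G.Walk x y) (w₂ : G.Walk y z) :
    (w₁.append w₂).length = w₁.length + w₂.length := by
  induction w₁ with
  | nil => simp [append, length]
  | cons d e w ih => simp only [append, length, ih]; omega

theorem exists_eq_append_of_mem_support (w : G.Walk x z) (h : v ∈ w.support) :
    ∃ (w₁ : G.Walk x v) (w₂ : G.Walk v z), w = w₁.append w₂ := by
  induction w with
  | nil =>
    obtain rfl : v = _ := by simpa [support] using h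
    exact ⟨nil _, nil _, rfl⟩
  | cons d e w ih =>
    rcases List.mem_cons.mp h with rfl | h
    · exact ⟨nil _, cons d e w, rfl⟩
    · obtain ⟨w₁, w₂, rfl⟩ := ih h
      exact ⟨cons d e w₁, w₂, rfl⟩

theorem exists_loop_of_not_nodup (w : G.Walk x z) (h : ¬ w.support.Nodup) :
    ∃ (v y : V) (w₁ : G.Walk x v) (d : Bool) (e : G.DirEdge d v y) (c : G.Walk y v)
      (w₂ : G.Walk v z), w = w₁.append (cons d e (c.append w₂)) := by
  induction w with
  | nil => exact absurd (List.nodup_singleton _) h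
  | @cons x _ _ d e w ih =>
    by_cases hx : x ∈ w.support
    · obtain ⟨c, w₂, rfl⟩ := exists_eq_append_of_mem_support w hx
      exact ⟨_, _, nil _, d, e, c, w₂, rfl⟩
    · obtain ⟨v, y, w₁, d', e', c, w₂, rfl⟩ :=
        ih fun hw => h (List.nodup_cons.mpr ⟨hx, hw⟩)
      exact ⟨v, y, cons d e w₁, d', e', c, w₂, rfl⟩

theorem openFrom_append (w₁ : G.Walk x y) (w₂ : G.Walk y z) :
    (w₁.append w₂).OpenFrom Z u l ↔
      w₁.OpenFrom Z u l ∧ w₂.OpenFrom Z (w₁.penult u) (w₁.lastDir l) := by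
  induction w₁ generalizing u l with
  | nil => simp [append, OpenFrom, penult, lastDir]
  | cons d e w ih => simp [append, OpenFrom, penult, lastDir, ih, and_assoc]

theorem OpenFrom.isOpen {w : G.Walk x z} (h : w.OpenFrom Z u l) : w.IsOpen Z := by
  cases w with
  | nil => trivial
  | cons d e w => exact h.2

/-- Until it first turns back, at a collider, such a walk follows edges forward from `x`. -/
theorem OpenFrom.lastDir_or_mem_anc {w : G.Walk x z} (h : w.OpenFrom Z u true) :
    w.lastDir true = true ∨ x ∈ G.anc Z := by
  induction w generalizing u with
  | nil => exact Or.inl rfl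
  | cons d e w ih =>
    cases d with
    | false => exact Or.inr (h.1.1 rfl rfl)
    | true => exact (ih h.2).imp id (mem_anc_of_edge e)

theorem OpenFrom.of_loop {e : G.DirEdge d v y} {c : G.Walk y v} {w : G.Walk v z}
    (h : (cons d e (c.append w)).OpenFrom Z u l) : w.OpenFrom Z u l := by
  obtain ⟨hv, hcw⟩ := h
  obtain ⟨hc, hw⟩ := (openFrom_append c w).mp hcw
  cases w with
  | nil => trivial
  | cons d' e' w =>
    refine ⟨⟨fun hl hr => ?_, hv.2.1, hw.1.2.2⟩, hw.2⟩
    cases d with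
    | false => exact hv.1 hl rfl
    | true => exact hc.lastDir_or_mem_anc.elim (hw.1.1 · hr) (mem_anc_of_edge e)

theorem OpenFrom.bypass {w₁ : G.Walk x v} {e : G.DirEdge d v y} {c : G.Walk y v}
    {w₂ : G.Walk v z} (h : (w₁.append (cons d e (c.append w₂))).OpenFrom Z u l) :
    (w₁.append w₂).OpenFrom Z u l := by
  induction w₁ generalizing u l with
  | nil => exact h.of_loop
  | cons d' e' w₁ ih => exact ⟨h.1, ih h.2⟩

theorem IsOpen.bypass {w₁ : G.Walk x v} {e : G.DirEdge d v y} {c : G.Walk y v}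
    {w₂ : G.Walk v z} (h : (w₁.append (cons d e (c.append w₂))).IsOpen Z) :
    (w₁.append w₂).IsOpen Z := by
  cases w₁ with
  | nil => exact ((openFrom_append c w₂).mp h).2.isOpen
  | cons d' e' w₁ => exact OpenFrom.bypass h

theorem IsOpen.exists_nodup {w : G.Walk x z} (hw : w.IsOpen Z) :
    ∃ w' : G.Walk x z, w'.IsOpen Z ∧ w'.support.Nodup := by
  by_cases hnd : w.support.Nodup
  · exact ⟨w, hw, hnd⟩
  obtain ⟨v, y, w₁, d, e, c, w₂, rfl⟩ := exists_loop_of_not_nodup w hnd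
  have hlen : (w₁.append w₂).length < (w₁.append (cons d e (c.append w₂))).length := by
    simp only [length_append, length]; omega
  exact hw.bypass.exists_nodup
termination_by w.length

theorem OpenFrom.concat_concat {w : G.Walk x u} {e : G.DirEdge l u v} {e' : G.DirEdge d v y}
    {p : V} {m : Bool} (h : (w.concat e).OpenFrom Z p m) (ho : G.SigmaOpenAt Z u l v (!d) y) :
    ((w.concat e).concat e').OpenFrom Z p m := by
  induction w generalizing p m with
  | nil => exact ⟨h.1, ho, trivial⟩
  | cons d₀ e₀ w ih => exact ⟨h.1, ih h.2 ho⟩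

theorem IsOpen.concat_concat {w : G.Walk x u} {e : G.DirEdge l u v} {e' : G.DirEdge d v y}
    (h : (w.concat e).IsOpen Z) (ho : G.SigmaOpenAt Z u l v (!d) y) :
    ((w.concat e).concat e').IsOpen Z := by
  cases w with
  | nil => exact ⟨ho, trivial⟩
  | cons d₀ e₀ w => exact OpenFrom.concat_concat h ho

theorem getVert_zero (w : G.Walk x z) : w.getVert 0 = x := by
  cases w <;> rfl

theorem getVert_length (w : G.Walk x z) : w.getVert w.length = z := by
  induction w with
  | nil => rfl
  | cons d e w ih => exact ih

theorem getVert_mem_support (w : G.Walk x z) (i : ℕ) : w.getVert i ∈ w.support := by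
  induction w generalizing i with
  | nil => simp [getVert, support]
  | cons d e w ih =>
    cases i with
    | zero => simp [getVert, support]
    | succ i => exact List.mem_cons_of_mem _ (ih i)

theorem getVert_inj (w : G.Walk x z) (hw : w.support.Nodup) {i j : ℕ} (hi : i ≤ w.length)
    (hj : j ≤ w.length) (h : w.getVert i = w.getVert j) : i = j := by
  induction w generalizing i j with
  | nil => simp_all [length]
  | @cons x _ _ d e w ih =>
    obtain ⟨hx, hw⟩ := List.nodup_cons.mp hw
    cases i <;> cases j
    · rfl
    · have h : x = _ := h
      exact absurd (h ▸ getVert_mem_support w _) hx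
    · have h : x = _ := h.symm
      exact absurd (h ▸ getVert_mem_support w _) hx
    · simp only [length] at hi hj
      exact congrArg (· + 1) (ih hw (by omega) (by omega) h)

theorem dirEdge_getVert (w : G.Walk x z) {i : ℕ} (hi : i < w.length) :
    G.DirEdge (w.dirAt i) (w.getVert i) (w.getVert (i + 1)) := by
  induction w generalizing i with
  | nil => simp [length] at hi
  | cons d e w ih =>
    cases i with
    | zero => simpa [getVert, dirAt, getVert_zero] using e
    | succ i => exact ih (by simp only [length] at hi; omega)

theorem IsOpen.sigmaOpenAt_getVert {w : G.Walk x z} (h : w.IsOpen Z) {j : ℕ}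
    (hj : j + 1 < w.length) :
    G.SigmaOpenAt Z (w.getVert j) (w.dirAt j) (w.getVert (j + 1)) (!w.dirAt (j + 1))
      (w.getVert (j + 2)) := by
  induction w generalizing j with
  | nil => simp [length] at hj
  | cons d e w ih =>
    cases w with
    | nil => simp [length] at hj
    | cons d' e' w =>
      cases j with
      | zero => simpa [getVert, dirAt, getVert_zero] using h.1
      | succ j => exact ih h.isOpen (by simp only [length] at hj ⊢; omega)

theorem length_pos_of_ne (w : G.Walk x z) (hxz : x ≠ z) : 0 < w.length := by
  cases w with
  | nil => exact absurd rfl hxz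
  | cons => simp [length]

def toGPath (w : G.Walk x z) (hw : w.support.Nodup) (hxz : x ≠ z) : GPath G x z where
  k := w.length - 1
  node i := w.getVert i
  dir i := w.dirAt i
  inj i j h := Fin.ext <| w.getVert_inj hw (by have := w.length_pos_of_ne hxz; omega)
    (by have := w.length_pos_of_ne hxz; omega) h
  first := w.getVert_zero
  last := by simpa [Nat.sub_add_cancel (w.length_pos_of_ne hxz)] using w.getVert_length
  adj i := dirEdge_iff.mp <| by
    simpa using w.dirEdge_getVert (i := i) (by have := w.length_pos_of_ne hxz; omega)

theorem not_sigmaBlocked_toGPath {w : G.Walk x z} (hw : w.IsOpen Z) (hnd : w.support.Nodup)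
    (hxz : x ≠ z) : ¬ (w.toGPath hnd hxz).sigmaBlocked Z := by
  refine (GPath.not_sigmaBlocked_iff _).mpr fun j => ?_
  have hj : (j : ℕ) + 1 < w.length := by have := j.isLt; simp only [toGPath] at this; omega
  exact hw.sigmaOpenAt_getVert hj

end Walk

/-- `G.SigmaConn Z A u v l`: some σ-open walk from `A` ends with the edge between `u` and `v`,
with its arrowhead at `v` iff `l`; the last vertex `v` itself is not checked. -/
inductive SigmaConn (G : DiGraph V) (Z : Set V) (A : V) : V → V → Bool → Prop
  | start {v : V} (d : Bool) (e : G.DirEdge d A v) : SigmaConn G Z A A v d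
  | step {u v w : V} {l : Bool} (d : Bool) (h : SigmaConn G Z A u v l) (e : G.DirEdge d v w)
      (ho : G.SigmaOpenAt Z u l v (!d) w) : SigmaConn G Z A v w d

theorem SigmaConn.exists_walk (h : G.SigmaConn Z A u v l) :
    ∃ (w : G.Walk A u) (e : G.DirEdge l u v), (w.concat e).IsOpen Z := by
  induction h with
  | start d e => exact ⟨Walk.nil _, e, trivial⟩
  | step d _ e ho ih =>
    obtain ⟨w, e₀, hw⟩ := ih
    exact ⟨w.concat e₀, e, hw.concat_concat ho⟩

theorem _root_.GPath.exists_sigmaConn {X Y : V} (p : GPath G X Y) (hp : ¬ p.sigmaBlocked Z) :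
    ∃ u l, G.SigmaConn Z X u Y l := by
  rw [GPath.not_sigmaBlocked_iff] at hp
  have hconn : ∀ i (hi : i < p.k + 1), G.SigmaConn Z (p.node 0) (p.node ⟨i, by omega⟩)
      (p.node ⟨i + 1, by omega⟩) (p.dir ⟨i, hi⟩) := by
    intro i hi
    induction i with
    | zero => exact .start _ (p.dirEdge ⟨0, hi⟩)
    | succ i ih => exact .step _ (ih (by omega)) (p.dirEdge ⟨i + 1, hi⟩) (hp ⟨i, by omega⟩)
  have h := hconn p.k (by omega)
  rw [show p.node ⟨p.k + 1, _⟩ = Y from p.last, p.first] at h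
  exact ⟨_, _, h⟩

theorem sigmaSep_iff_not_sigmaConn (hAB : A ≠ B) :
    G.sigmaSep A B Z ↔ ¬ ∃ u l, G.SigmaConn Z A u B l := by
  refine ⟨fun hsep ⟨u, l, h⟩ => ?_, fun h p => ?_⟩
  · obtain ⟨w, e, hw⟩ := h.exists_walk
    obtain ⟨w', hw', hnd⟩ := hw.exists_nodup
    exact Walk.not_sigmaBlocked_toGPath hw' hnd hAB (hsep _)
  · by_contra hp
    exact h (p.exists_sigmaConn hp)

end DiGraph

namespace IsAcyclification

open DiGraph

variable {V : Type} {G Ga : DiGraph V} {Z : Set V} {v x y c : V}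

theorem edge_of_edge_of_not_mem_scc (hGa : IsAcyclification G Ga) (he : G.Edge x y)
    (hxy : x ∉ G.scc y) (hc : c ∈ G.scc y) : Ga.Edge x c := by
  rw [← scc_eq_of_mem hc] at hxy
  exact (hGa.2.1 x c (fun h => hxy (h ▸ G.mem_scc_self c)) hxy).mpr
    ⟨y, mem_scc_comm.mp hc, he⟩

theorem exists_edge_mem_scc (hGa : IsAcyclification G Ga) (he : Ga.Edge x y) :
    ∃ c ∈ G.scc y, G.Edge x c := by
  by_cases hxy : x ∈ G.scc y
  · obtain rfl | hxy' := Relation.reflTransGen_iff_eq_or_transGen.mp hxy.2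
    · exact absurd he (Ga.loopless _)
    · obtain ⟨c, hxc, hcy⟩ := Relation.TransGen.head'_iff.mp hxy'
      exact ⟨c, mem_scc_of_edge hxy hxc hcy, hxc⟩
  · exact (hGa.2.1 x y (fun h => hxy (h ▸ G.mem_scc_self y)) hxy).mp he

theorem reach (hGa : IsAcyclification G Ga) (h : Ga.reach x y) : G.reach x y := by
  induction h with
  | refl => exact Relation.ReflTransGen.refl
  | tail _ he ih =>
    obtain ⟨c, hc, hbc⟩ := hGa.exists_edge_mem_scc he
    exact Relation.ReflTransGen.trans ih (Relation.ReflTransGen.head hbc hc.2)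

theorem anc_subset (hGa : IsAcyclification G Ga) : Ga.anc Z ⊆ G.anc Z :=
  fun _ ⟨s, hs, h⟩ => ⟨s, hs, hGa.reach h⟩

theorem exists_mem_scc_mem_anc (hGa : IsAcyclification G Ga) (hv : v ∈ G.anc Z) :
    ∃ c ∈ G.scc v, c ∈ Ga.anc Z := by
  obtain ⟨z, hz, hr⟩ := hv
  induction hr using Relation.ReflTransGen.head_induction_on with
  | refl => exact ⟨z, G.mem_scc_self z, mem_anc_of_mem hz⟩
  | @head a b hab _ ih =>
    obtain ⟨c, hc, hcZ⟩ := ih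
    by_cases hb : b ∈ G.scc a
    · exact ⟨c, scc_eq_of_mem hb ▸ hc, hcZ⟩
    · exact ⟨a, G.mem_scc_self a,
        mem_anc_of_edge (hGa.edge_of_edge_of_not_mem_scc hab (mem_scc_comm.not.mp hb) hc) hcZ⟩

theorem exists_mem_scc_mem_anc_of_sigmaOpenAt (hGa : IsAcyclification G Ga) {u w : V} {l : Bool}
    (hanc : l = false → ∃ c ∈ G.scc v, c ∈ Ga.anc Z) (ho : G.SigmaOpenAt Z u l v true w) :
    ∃ c ∈ G.scc v, c ∈ Ga.anc Z := by
  cases l with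
  | false => exact hanc rfl
  | true => exact hGa.exists_mem_scc_mem_anc (ho.1 rfl rfl)

theorem exists_dirEdge_of_mem_scc (hGa : IsAcyclification G Ga) (h : x ∈ G.scc y)
    (hne : x ≠ y) : ∃ d, Ga.DirEdge d x y := by
  rcases hGa.2.2 x y hne h with ⟨hxy, -⟩ | ⟨hyx, -⟩
  · exact ⟨true, hxy⟩
  · exact ⟨false, hyx⟩

end IsAcyclification

namespace DiGraph

variable {V : Type} {G Ga : DiGraph V} {Z : Set V} {A u v w x c s t : V} {l d : Bool}

namespace SigmaConn

theorem dirEdge (h : G.SigmaConn Z A u v l) : G.DirEdge l u v := by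
  cases h with
  | start _ e => exact e
  | step _ _ e => exact e

theorem out_of_not_mem (h : G.SigmaConn Z A u v l) (hv : v ∉ Z) (he : G.Edge v w) :
    G.SigmaConn Z A v w true :=
  step true h he ⟨fun _ => nofun, fun _ h => absurd h hv, fun _ h => absurd h hv⟩

theorem into_of_mem_anc (h : G.SigmaConn Z A u v true) (hv : v ∈ G.anc Z) (he : G.Edge w v) :
    G.SigmaConn Z A v w false :=
  step false h he ⟨fun _ _ => hv, nofun, nofun⟩

theorem extend_forward_in_scc (h : G.SigmaConn Z A u c true) (hr : G.reach c t)
    (hc : c ∈ G.scc t) :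
    ∃ u', G.SigmaConn Z A u' t true := by
  induction hr with
  | refl => exact ⟨u, h⟩
  | @tail b t hcb hbt ih =>
    obtain ⟨u', h'⟩ := ih ⟨Relation.ReflTransGen.head hbt hc.1, hcb⟩
    have htb : t ∈ G.scc b :=
      ⟨Relation.ReflTransGen.single hbt, Relation.ReflTransGen.trans hc.1 hcb⟩
    exact ⟨b, step true h' hbt ⟨fun _ => nofun, nofun, fun _ _ => htb⟩⟩

theorem extend_backward_in_scc (hv : ∀ x, G.Edge x v → G.SigmaConn Z A v x false)
    (hr : G.reach c v) (hc : c ∈ G.scc v) : ∀ x, G.Edge x c → G.SigmaConn Z A c x false := by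
  induction hr using Relation.ReflTransGen.head_induction_on with
  | refl => exact hv
  | @head c c' hcc' hc'v ih =>
    have hc' : c' ∈ G.scc v := mem_scc_of_edge hc hcc' hc'v
    intro x hx
    exact step false (ih hc' c hcc') hx ⟨nofun, fun _ _ => scc_eq_of_mem hc ▸ hc', nofun⟩

theorem of_acyclification (hGa : IsAcyclification G Ga) (h : Ga.SigmaConn Z A u v l) :
    ∃ u', G.SigmaConn Z A u' v l := by
  induction h with
  | start d e =>
    cases d with
    | true =>
      obtain ⟨c, hc, hec⟩ := hGa.exists_edge_mem_scc e
      exact extend_forward_in_scc (start true hec) hc.2 hc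
    | false =>
      obtain ⟨c, hc, hec⟩ := hGa.exists_edge_mem_scc e
      exact ⟨c, extend_backward_in_scc (fun x hx => start false hx) hc.2 hc _ hec⟩
  | @step u v w l d h e ho ih =>
    obtain ⟨u', h'⟩ := ih
    cases d with
    | true =>
      obtain ⟨c, hc, hec⟩ := hGa.exists_edge_mem_scc e
      have hv := hGa.1.not_mem_of_imp_mem_scc e.ne.symm (ho.2.2 rfl)
      exact extend_forward_in_scc (h'.out_of_not_mem hv hec) hc.2 hc
    | false =>
      obtain ⟨c, hc, hec⟩ := hGa.exists_edge_mem_scc e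
      have hv : ∀ x, G.Edge x v → G.SigmaConn Z A v x false := fun x hx =>
        step false h' hx ⟨fun hl _ => hGa.anc_subset (ho.1 hl rfl),
          fun hl hv => absurd hv (hGa.1.not_mem_of_imp_mem_scc h.dirEdge.ne (ho.2.1 hl)),
          nofun⟩
      exact ⟨c, extend_backward_in_scc hv hc.2 hc _ hec⟩

end SigmaConn

def Continuable (G : DiGraph V) (Z : Set V) (A s : V) : Prop :=
  s = A ∨ (s ∉ Z ∧ ∃ u, G.SigmaConn Z A u s false)

theorem Continuable.sigmaConn (hs : G.Continuable Z A s) (e : G.DirEdge d s x) :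
    G.SigmaConn Z A s x d := by
  rcases hs with rfl | ⟨hsZ, u, h⟩
  · exact .start d e
  · exact .step d h e ⟨nofun, fun _ h => absurd h hsZ, fun _ h => absurd h hsZ⟩

/-- How `Ga` keeps up with a σ-open walk of `G` that has just reached `v` from `u`. Either the
walk entered the component of `v` along an arrowhead, so `Ga` reaches every vertex of the
component along an arrowhead (and once the walk has turned back inside the component, the
collider where it turned is an ancestor of `Z`); or some vertex of the component is
`Continuable` in `Ga`; or the walk has just come into `v` from outside its component along an
edge out of `v`. -/
inductive Mirror (G Ga : DiGraph V) (Z : Set V) (A u v : V) (l : Bool) : Prop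
  | heads (hconn : ∀ c ∈ G.scc v, ∃ t, Ga.SigmaConn Z A t c true)
      (hanc : l = false → ∃ c ∈ G.scc v, c ∈ Ga.anc Z)
  | continuable {s : V} (hs : s ∈ G.scc v) (hcont : Ga.Continuable Z A s)
  | tail (hl : l = false) (hu : u ∉ G.scc v) (hconn : ∃ t, Ga.SigmaConn Z A t v false)

namespace Mirror

theorem start (hGa : IsAcyclification G Ga) (e : G.DirEdge d A v) : Mirror G Ga Z A A v d := by
  by_cases hA : A ∈ G.scc v
  · exact .continuable hA (Or.inl rfl)
  cases d with
  | true =>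
    exact .heads (fun c hc => ⟨A, .start true (hGa.edge_of_edge_of_not_mem_scc e hA hc)⟩) nofun
  | false =>
    exact .tail rfl hA ⟨A, .start false
      (hGa.edge_of_edge_of_not_mem_scc e (mem_scc_comm.not.mp hA) (G.mem_scc_self A))⟩

theorem step_within (hGa : IsAcyclification G Ga) (hm : Mirror G Ga Z A u v l)
    (hw : w ∈ G.scc v) (ho : G.SigmaOpenAt Z u l v (!d) w) : Mirror G Ga Z A v w d := by
  have hscc := scc_eq_of_mem hw
  cases hm with
  | heads hconn hanc =>
    refine .heads (hscc ▸ hconn) fun hd => hscc ▸ ?_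
    subst hd
    exact hGa.exists_mem_scc_mem_anc_of_sigmaOpenAt hanc ho
  | continuable hs hcont => exact .continuable (hscc ▸ hs) hcont
  | tail hl hu hconn =>
    exact .continuable (hscc ▸ G.mem_scc_self v) (Or.inr ⟨fun hv => hu (ho.2.1 hl hv), hconn⟩)

theorem sigmaConn_of_edge (hGa : IsAcyclification G Ga) (hm : Mirror G Ga Z A u v l)
    (hv : v ∉ Z) (he : Ga.Edge v x) : Ga.SigmaConn Z A v x true := by
  cases hm with
  | heads hconn _ =>
    obtain ⟨t, h⟩ := hconn v (G.mem_scc_self v)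
    exact h.out_of_not_mem hv he
  | @continuable s hs hcont =>
    by_cases hsv : s = v
    · subst hsv
      exact hcont.sigmaConn (d := true) he
    · obtain ⟨d, e⟩ := hGa.exists_dirEdge_of_mem_scc hs hsv
      exact (hcont.sigmaConn e).out_of_not_mem hv he
  | tail _ _ hconn =>
    obtain ⟨t, h⟩ := hconn
    exact h.out_of_not_mem hv he

theorem step_across (hGa : IsAcyclification G Ga) (hm : Mirror G Ga Z A u v l)
    (hw : w ∉ G.scc v) (e : G.DirEdge d v w) (ho : G.SigmaOpenAt Z u l v (!d) w) :
    Mirror G Ga Z A v w d := by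
  cases d with
  | true =>
    have hv : v ∉ Z := fun hv => hw (ho.2.2 rfl hv)
    exact .heads (fun c hc => ⟨v, hm.sigmaConn_of_edge hGa hv
      (hGa.edge_of_edge_of_not_mem_scc e (mem_scc_comm.not.mp hw) hc)⟩) nofun
  | false =>
    have hwc : ∀ c ∈ G.scc v, Ga.Edge w c := fun c hc => hGa.edge_of_edge_of_not_mem_scc e hw hc
    refine .tail rfl (mem_scc_comm.not.mp hw) ?_
    cases hm with
    | heads hconn hanc =>
      obtain ⟨c, hc, hcZ⟩ := hGa.exists_mem_scc_mem_anc_of_sigmaOpenAt hanc ho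
      obtain ⟨t, h⟩ := hconn c hc
      exact ⟨c, h.into_of_mem_anc hcZ (hwc c hc)⟩
    | @continuable s hs hcont => exact ⟨s, hcont.sigmaConn (d := false) (hwc s hs)⟩
    | tail hl hu hconn =>
      have hcont : Ga.Continuable Z A v := Or.inr ⟨fun hv => hu (ho.2.1 hl hv), hconn⟩
      exact ⟨v, hcont.sigmaConn (d := false) (hwc v (G.mem_scc_self v))⟩

theorem exists_sigmaConn (hGa : IsAcyclification G Ga) (hm : Mirror G Ga Z A u v l)
    (hvA : v ≠ A) : ∃ t l', Ga.SigmaConn Z A t v l' := by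
  cases hm with
  | heads hconn _ =>
    obtain ⟨t, h⟩ := hconn v (G.mem_scc_self v)
    exact ⟨t, true, h⟩
  | @continuable s hs hcont =>
    by_cases hsv : s = v
    · subst hsv
      obtain hA | ⟨_, t, h⟩ := hcont
      · exact absurd hA hvA
      · exact ⟨t, false, h⟩
    · obtain ⟨d, e⟩ := hGa.exists_dirEdge_of_mem_scc hs hsv
      exact ⟨s, d, hcont.sigmaConn e⟩
  | tail _ _ hconn =>
    obtain ⟨t, h⟩ := hconn
    exact ⟨t, false, h⟩

end Mirror

theorem SigmaConn.mirror (hGa : IsAcyclification G Ga) (h : G.SigmaConn Z A u v l) :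
    Mirror G Ga Z A u v l := by
  induction h with
  | start d e => exact .start hGa e
  | @step u v w l d _ e ho ih =>
    by_cases hw : w ∈ G.scc v
    · exact ih.step_within hGa hw ho
    · exact ih.step_across hGa hw e ho

end DiGraph

theorem dSep_acyclification_iff_sigmaSep_general {V : Type}
    (G Ga : DiGraph V) (hGa : IsAcyclification G Ga)
    (A B : V) (hAB : A ≠ B) (Z : Set V) :
    Ga.dSep A B Z ↔ G.sigmaSep A B Z := by
  rw [hGa.1.dSep_iff_sigmaSep, DiGraph.sigmaSep_iff_not_sigmaConn hAB,
    DiGraph.sigmaSep_iff_not_sigmaConn hAB]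
  refine not_congr ⟨fun ⟨u, l, h⟩ => ?_, fun ⟨u, l, h⟩ => ?_⟩
  · obtain ⟨u', h'⟩ := h.of_acyclification hGa
    exact ⟨u', l, h'⟩
  · exact (h.mirror hGa).exists_sigmaConn hGa hAB.symm

/-- d-separation in any σ-acyclification coincides with
σ-separation in the original (possibly cyclic) graph. -/
theorem dSep_acyclification_iff_sigmaSep {V : Type} [Fintype V]
    (G Ga : DiGraph V) (hGa : IsAcyclification G Ga)
    (A B : V) (hAB : A ≠ B) (Z : Set V) (hAZ : A ∉ Z) (hBZ : B ∉ Z) :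
    Ga.dSep A B Z ↔ G.sigmaSep A B Z :=
  dSep_acyclification_iff_sigmaSep_general G Ga hGa A B hAB Z
end

section
/- Let G=(V,E) be a directed graph, possibly cyclic, and let X,Y ∈ V be distinct nodes such that De(Y)=∅ and De(X) ⊆ {Y}. Then there exists a σ-acyclification Ĝ^acy=(V,E^acy) of G such that in Ĝ^acy the node Y has no children, the node X has no descendants other than possibly Y (De(X) ⊆ {Y} in Ĝ^acy), and the edge X→Y belongs to E^acy if and only if X→Y belongs to E. -/
/-- Preservation of the edge `X → Y` under σ-acyclification:
there is a σ-acyclification in which `Y` has no children, `X` has no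
descendants other than possibly `Y`, and the edge `X → Y` is present iff it is
present in `G`. -/
theorem exists_acyclification_preserving_edge {V : Type} [Fintype V]
    (G : DiGraph V) (X Y : V) (hXY : X ≠ Y)
    (hY : G.de Y = ∅) (hX : G.de X ⊆ {Y}) :
    ∃ Ga : DiGraph V, IsAcyclification G Ga ∧
      Ga.ch Y = ∅ ∧ Ga.de X ⊆ {Y} ∧ (Ga.Edge X Y ↔ G.Edge X Y) := by
  classical
  obtain ⟨f⟩ : Nonempty (V ≃ Fin (Fintype.card V)) := ⟨Fintype.equivFin V⟩
  set lt : V → V → Prop := fun a b => f a < f b with hlt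
  set E' : V → V → Prop := fun A B =>
    (A ∈ G.scc B ∧ lt A B) ∨ (A ∉ G.scc B ∧ ∃ W ∈ G.scc B, G.Edge A W) with hE'
  have scc_self : ∀ A : V, A ∈ G.scc A := fun A =>
    ⟨Relation.ReflTransGen.refl, Relation.ReflTransGen.refl⟩
  have loopless' : ∀ v, ¬ E' v v := by
    intro v hv
    rcases hv with ⟨_, h⟩ | ⟨h, _⟩
    · exact lt_irrefl _ h
    · exact h (scc_self v)
  have reach_of : ∀ A B, E' A B → G.reach A B := by
    rintro A B (⟨h, _⟩ | ⟨_, W, hW, hAW⟩)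
    · exact h.2
    · exact (Relation.ReflTransGen.single hAW).trans hW.2
  have treach : ∀ A B, Relation.TransGen E' A B → G.reach A B := by
    intro A B h
    induction h with
    | single h => exact reach_of _ _ h
    | tail _ h2 ih => exact ih.trans (reach_of _ _ h2)
  have key : ∀ a b, Relation.TransGen E' a b → G.reach b a → lt a b := by
    intro a b h
    induction h with
    | single h =>
      intro hba
      have hab := reach_of _ _ h
      rcases h with ⟨_, h1⟩ | ⟨hns, _⟩
      · exact h1
      · exact absurd ⟨hba, hab⟩ hns
    | @tail c b h1 h2 ih =>
      intro hba
      have hcb : G.reach c b := reach_of _ _ h2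
      have hca : G.reach c a := hcb.trans hba
      have hbc : G.reach b c := hba.trans (treach _ _ h1)
      have hltac : lt a c := ih hca
      rcases h2 with ⟨_, h3⟩ | ⟨hns, _⟩
      · exact lt_trans hltac h3
      · exact absurd ⟨hbc, hcb⟩ hns
  have hacy : ∀ v, ¬ Relation.TransGen E' v v := fun v hv =>
    lt_irrefl _ (key v v hv Relation.ReflTransGen.refl)
  -- Y has no nontrivial reach
  have hYreach : ∀ B, G.reach Y B → B = Y := by
    intro B h
    rcases (Relation.reflTransGen_iff_eq_or_transGen.mp h) with h | h
    · exact h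
    · by_cases hBY : B = Y
      · exact hBY
      · exact absurd (show B ∈ G.de Y from ⟨hBY, h⟩) (by simp [hY])
  have hsccY : G.scc Y = {Y} := by
    ext W
    constructor
    · intro hW; exact hYreach W hW.1
    · intro hW; rw [hW]; exact scc_self Y
  refine ⟨⟨E', loopless'⟩, ⟨hacy, ?_, ?_⟩, ?_, ?_, ?_⟩
  · intro A B hne hns
    simp only [hE']
    constructor
    · rintro (⟨h, _⟩ | ⟨_, h⟩)
      · exact absurd h hns
      · exact h
    · intro h; exact Or.inr ⟨hns, h⟩
  · intro A B hne hs
    have hs' : B ∈ G.scc A := ⟨hs.2, hs.1⟩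
    have hfne : f A ≠ f B := fun h => hne (f.injective h)
    rcases lt_or_gt_of_ne hfne with h | h
    · exact Or.inl ⟨Or.inl ⟨hs, h⟩, by
        rintro (⟨_, h'⟩ | ⟨hns, _⟩)
        · exact absurd (lt_trans h h') (lt_irrefl _)
        · exact hns hs'⟩
    · exact Or.inr ⟨Or.inl ⟨hs', h⟩, by
        rintro (⟨_, h'⟩ | ⟨hns, _⟩)
        · exact absurd (lt_trans h' h) (lt_irrefl _)
        · exact hns hs⟩
  · -- ch Y = ∅
    ext B
    simp only [DiGraph.ch, Set.mem_setOf_eq, Set.mem_empty_iff_false, iff_false]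
    rintro (⟨hs, hl⟩ | ⟨_, W, hW, hYW⟩)
    · have hB : B = Y := hYreach B hs.2
      rw [hB] at hl; exact lt_irrefl _ hl
    · have hWY : W = Y := hYreach W (Relation.ReflTransGen.single hYW)
      rw [hWY] at hYW; exact G.loopless Y hYW
  · -- de X ⊆ {Y}
    intro Z hZ
    obtain ⟨hZX, hT⟩ := hZ
    have hreach : G.reach X Z := treach _ _ hT
    rcases Relation.reflTransGen_iff_eq_or_transGen.mp hreach with h | h
    · exact absurd h hZX
    · exact hX ⟨hZX, h⟩
  · -- edge X Y iff
    have hXs : X ∉ G.scc Y := by rw [hsccY]; simpa using hXY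
    show E' X Y ↔ G.Edge X Y
    simp only [hE']
    constructor
    · rintro (⟨h, _⟩ | ⟨_, W, hW, hXW⟩)
      · exact absurd h hXs
      · rw [hsccY] at hW; simp only [Set.mem_singleton_iff] at hW
        rw [hW] at hXW; exact hXW
    · intro h; exact Or.inr ⟨hXs, Y, scc_self Y, h⟩
end
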